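/- arXiv:math-ph/0403003 — 2 statements merged into one kernel-verified Lean document; each statement's English description precedes it below -/
import Mathlib

section
/- For probability measures μ₁, μ₂ on a separable Banach space B with finite p-moments, the weak p-Wasserstein distance defined by ⦀μ₁ − μ₂⦀ₚᵖ = sup over nonzero ℓ in the dual B* of inf over couplings μ_ℓ of μ₁ and μ₂ of ∫ |ℓ(x) − ℓ(y)|ᵖ / ‖ℓ‖ᵖ dμ_ℓ(x,y) satisfies: for every ℓ ∈ B*, the characteristic functions χ_μ(ℓ) = ∫ exp(i ℓ(x)) dμ(x) obey |χ_{μ₁}(ℓ) − χ_{μ₂}(ℓ)| ≤ ‖ℓ‖ · ⦀μ₁ − μ₂⦀ₚ. -/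
open MeasureTheory ENNReal

/-- The set of couplings of two measures. -/
def Couplings {B : Type*} [MeasurableSpace B] (μ₁ μ₂ : Measure B) : Set (Measure (B × B)) :=
  {π | π.map Prod.fst = μ₁ ∧ π.map Prod.snd = μ₂}

/-- The `p`-th power of the weak `p`-Wasserstein distance:
`⦀μ₁ − μ₂⦀ₚᵖ = sup_{ℓ ∈ B*, ℓ ≠ 0} inf_{couplings π} ∫ |ℓ x − ℓ y|ᵖ / ‖ℓ‖ᵖ dπ`. -/
noncomputable def weakWassPow {B : Type*} [NormedAddCommGroup B] [NormedSpace ℝ B]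
    [MeasurableSpace B] (p : ℝ) (μ₁ μ₂ : Measure B) : ℝ≥0∞ :=
  ⨆ ℓ : {ℓ : B →L[ℝ] ℝ // ℓ ≠ 0},
    ⨅ π : Couplings μ₁ μ₂,
      ∫⁻ z, ENNReal.ofReal (|ℓ.1 z.1 - ℓ.1 z.2| ^ p / ‖ℓ.1‖ ^ p) ∂π.1

/-- The weak `p`-Wasserstein distance `⦀μ₁ − μ₂⦀ₚ`. -/
noncomputable def weakWass {B : Type*} [NormedAddCommGroup B] [NormedSpace ℝ B]
    [MeasurableSpace B] (p : ℝ) (μ₁ μ₂ : Measure B) : ℝ≥0∞ :=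
  (weakWassPow p μ₁ μ₂) ^ (1 / p)

/-- The characteristic function of a measure `μ` on a Banach space at `ℓ ∈ B*`. -/
noncomputable def charFun {B : Type*} [NormedAddCommGroup B] [NormedSpace ℝ B]
    [MeasurableSpace B] (μ : Measure B) (ℓ : B →L[ℝ] ℝ) : ℂ :=
  ∫ x, Complex.exp (Complex.I * (ℓ x : ℂ)) ∂μ

/-!
For any coupling `π` of `μ₁` and `μ₂`, `χ_{μ₁}(ℓ) - χ_{μ₂}(ℓ) = ∫ (e^{iℓx} - e^{iℓy}) dπ(x, y)`,
and `t ↦ e^{it}` is `1`-Lipschitz, so the difference is at most `∫ |ℓx - ℓy| dπ`. Jensen's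
inequality bounds this by `‖ℓ‖ (∫ |ℓx - ℓy|ᵖ / ‖ℓ‖ᵖ dπ)^{1/p}`, and taking the infimum over
couplings gives `‖ℓ‖ ⦀μ₁ - μ₂⦀ₚ`. Finite `p`-th moments make `⦀μ₁ - μ₂⦀ₚ` finite (already the
product coupling has finite cost), which is what allows passing from `ℝ≥0∞` to `ℝ`.
-/

lemma Complex.enorm_exp_I_mul_ofReal_sub_exp_I_mul_ofReal_le (a b : ℝ) :
    ‖Complex.exp (Complex.I * a) - Complex.exp (Complex.I * b)‖ₑ ≤ ‖a - b‖ₑ := by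
  have h : Complex.exp (Complex.I * a) - Complex.exp (Complex.I * b)
      = Complex.exp (Complex.I * b) * (Complex.exp (Complex.I * (a - b : ℝ)) - 1) := by
    rw [mul_sub, ← Complex.exp_add, mul_one]
    push_cast
    ring_nf
  rw [h, enorm_mul, mul_comm Complex.I, Complex.enorm_exp_ofReal_mul_I, one_mul]
  exact Real.enorm_exp_I_mul_ofReal_sub_one_le

lemma lintegral_enorm_le_lintegral_enorm_rpow {α E : Type*} [MeasurableSpace α]
    [NormedAddCommGroup E] {μ : Measure α} [IsProbabilityMeasure μ] {f : α → E} {p : ℝ}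
    (hp : 1 ≤ p) (hf : AEStronglyMeasurable f μ) :
    ∫⁻ a, ‖f a‖ₑ ∂μ ≤ (∫⁻ a, ‖f a‖ₑ ^ p ∂μ) ^ (1 / p) := by
  simpa [eLpNorm'_eq_lintegral_enorm] using
    eLpNorm'_le_eLpNorm'_of_exponent_le one_pos hp μ hf

section Couplings

variable {B : Type*} [MeasurableSpace B] {μ₁ μ₂ : Measure B} {π : Measure (B × B)}

lemma prod_mem_couplings [IsProbabilityMeasure μ₁] [IsProbabilityMeasure μ₂] :
    μ₁.prod μ₂ ∈ Couplings μ₁ μ₂ := by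
  simp [Couplings]

lemma isProbabilityMeasure_of_mem_couplings [IsProbabilityMeasure μ₁]
    (hπ : π ∈ Couplings μ₁ μ₂) : IsProbabilityMeasure π := by
  have : IsProbabilityMeasure (π.map Prod.fst) := hπ.1 ▸ ‹_›
  exact Measure.isProbabilityMeasure_of_map Prod.fst

lemma lintegral_fst_of_mem_couplings (hπ : π ∈ Couplings μ₁ μ₂) {f : B → ℝ≥0∞}
    (hf : Measurable f) : ∫⁻ z, f z.1 ∂π = ∫⁻ x, f x ∂μ₁ := by
  rw [← hπ.1, lintegral_map hf measurable_fst]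

lemma lintegral_snd_of_mem_couplings (hπ : π ∈ Couplings μ₁ μ₂) {f : B → ℝ≥0∞}
    (hf : Measurable f) : ∫⁻ z, f z.2 ∂π = ∫⁻ x, f x ∂μ₂ := by
  rw [← hπ.2, lintegral_map hf measurable_snd]

lemma integral_fst_of_mem_couplings {E : Type*} [NormedAddCommGroup E] [NormedSpace ℝ E]
    (hπ : π ∈ Couplings μ₁ μ₂) {f : B → E} (hf : AEStronglyMeasurable f μ₁) :
    ∫ z, f z.1 ∂π = ∫ x, f x ∂μ₁ := by
  rw [← hπ.1] at hf ⊢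
  exact (integral_map measurable_fst.aemeasurable hf).symm

lemma integral_snd_of_mem_couplings {E : Type*} [NormedAddCommGroup E] [NormedSpace ℝ E]
    (hπ : π ∈ Couplings μ₁ μ₂) {f : B → E} (hf : AEStronglyMeasurable f μ₂) :
    ∫ z, f z.2 ∂π = ∫ x, f x ∂μ₂ := by
  rw [← hπ.2] at hf ⊢
  exact (integral_map measurable_snd.aemeasurable hf).symm

end Couplings

section WeakWasserstein

variable {B : Type*} [NormedAddCommGroup B] [NormedSpace ℝ B] [MeasurableSpace B]
  {μ₁ μ₂ : Measure B} {π : Measure (B × B)} {p : ℝ}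

noncomputable def couplingCost (p : ℝ) (ℓ : B →L[ℝ] ℝ) (π : Measure (B × B)) : ℝ≥0∞ :=
  ∫⁻ z, ENNReal.ofReal (|ℓ z.1 - ℓ z.2| ^ p / ‖ℓ‖ ^ p) ∂π

lemma iInf_couplingCost_le_weakWassPow {ℓ : B →L[ℝ] ℝ} (hℓ : ℓ ≠ 0) :
    ⨅ π : Couplings μ₁ μ₂, couplingCost p ℓ π ≤ weakWassPow p μ₁ μ₂ :=
  le_iSup (fun ℓ : {ℓ : B →L[ℝ] ℝ // ℓ ≠ 0} => ⨅ π : Couplings μ₁ μ₂, couplingCost p ℓ.1 π)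
    ⟨ℓ, hℓ⟩

lemma enorm_rpow_mul_couplingCost {ℓ : B →L[ℝ] ℝ} (hℓ : ℓ ≠ 0) (hp : 0 ≤ p) :
    ‖ℓ‖ₑ ^ p * couplingCost p ℓ π = ∫⁻ z, ‖ℓ z.1 - ℓ z.2‖ₑ ^ p ∂π := by
  rw [couplingCost, ← lintegral_const_mul' _ _ (by simp [hp])]
  refine lintegral_congr fun z => ?_
  have hℓp : ‖ℓ‖ ^ p ≠ 0 := (Real.rpow_pos_of_pos (norm_pos_iff.mpr hℓ) p).ne'
  rw [← ofReal_norm, Real.enorm_eq_ofReal_abs, ENNReal.ofReal_rpow_of_nonneg (norm_nonneg _) hp,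
    ← ENNReal.ofReal_mul (by positivity), mul_div_cancel₀ _ hℓp,
    ENNReal.ofReal_rpow_of_nonneg (abs_nonneg _) hp]

lemma couplingCost_le_lintegral_enorm_add_rpow {ℓ : B →L[ℝ] ℝ} (hℓ : ℓ ≠ 0) (hp : 0 ≤ p) :
    couplingCost p ℓ π ≤ ∫⁻ z, (‖z.1‖ₑ + ‖z.2‖ₑ) ^ p ∂π := by
  have hℓ0 : ‖ℓ‖ₑ ≠ 0 := by simpa [enorm_eq_nnnorm] using hℓ
  have hℓp : ‖ℓ‖ₑ ^ p ≠ 0 := (ENNReal.rpow_pos (pos_iff_ne_zero.2 hℓ0) enorm_ne_top).ne'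
  have hℓp' : ‖ℓ‖ₑ ^ p ≠ ∞ := ENNReal.rpow_ne_top_of_nonneg hp enorm_ne_top
  rw [← ENNReal.mul_le_mul_iff_right hℓp hℓp', enorm_rpow_mul_couplingCost hℓ hp,
    ← lintegral_const_mul' _ _ hℓp']
  refine lintegral_mono fun z => ?_
  rw [← ENNReal.mul_rpow_of_nonneg _ _ hp]
  gcongr
  calc ‖ℓ z.1 - ℓ z.2‖ₑ = ‖ℓ (z.1 - z.2)‖ₑ := by rw [map_sub]
    _ ≤ ‖ℓ‖ₑ * ‖z.1 - z.2‖ₑ := ℓ.le_opENorm _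
    _ ≤ ‖ℓ‖ₑ * (‖z.1‖ₑ + ‖z.2‖ₑ) := by gcongr; exact enorm_sub_le

lemma couplingCost_le_two_rpow_mul_moments [OpensMeasurableSpace B] {ℓ : B →L[ℝ] ℝ}
    (hℓ : ℓ ≠ 0) (hp : 1 ≤ p) (hπ : π ∈ Couplings μ₁ μ₂) :
    couplingCost p ℓ π ≤ 2 ^ (p - 1) *
      (∫⁻ x, ENNReal.ofReal (‖x‖ ^ p) ∂μ₁ + ∫⁻ x, ENNReal.ofReal (‖x‖ ^ p) ∂μ₂) := by
  have h_enorm (x : B) : ENNReal.ofReal (‖x‖ ^ p) = ‖x‖ₑ ^ p := by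
    rw [← ENNReal.ofReal_rpow_of_nonneg (norm_nonneg x) (by linarith), ofReal_norm]
  have hm : Measurable fun x : B => ‖x‖ₑ ^ p := measurable_enorm.pow_const p
  simp only [h_enorm]
  calc couplingCost p ℓ π ≤ ∫⁻ z, (‖z.1‖ₑ + ‖z.2‖ₑ) ^ p ∂π :=
        couplingCost_le_lintegral_enorm_add_rpow hℓ (by linarith)
    _ ≤ ∫⁻ z, 2 ^ (p - 1) * (‖z.1‖ₑ ^ p + ‖z.2‖ₑ ^ p) ∂π :=
        lintegral_mono fun z => ENNReal.rpow_add_le_mul_rpow_add_rpow _ _ hp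
    _ = _ := by
        rw [lintegral_const_mul' _ _ (by simp),
          lintegral_add_left (f := fun z : B × B => ‖z.1‖ₑ ^ p) (hm.comp measurable_fst),
          lintegral_fst_of_mem_couplings hπ hm, lintegral_snd_of_mem_couplings hπ hm]

lemma weakWassPow_lt_top [OpensMeasurableSpace B] [IsProbabilityMeasure μ₁]
    [IsProbabilityMeasure μ₂] (hp : 1 ≤ p)
    (hmom₁ : ∫⁻ x, ENNReal.ofReal (‖x‖ ^ p) ∂μ₁ < ∞)
    (hmom₂ : ∫⁻ x, ENNReal.ofReal (‖x‖ ^ p) ∂μ₂ < ∞) :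
    weakWassPow p μ₁ μ₂ < ∞ := by
  have h_bound : weakWassPow p μ₁ μ₂ ≤ 2 ^ (p - 1) *
      (∫⁻ x, ENNReal.ofReal (‖x‖ ^ p) ∂μ₁ + ∫⁻ x, ENNReal.ofReal (‖x‖ ^ p) ∂μ₂) :=
    iSup_le fun ℓ => (iInf_le _ ⟨μ₁.prod μ₂, prod_mem_couplings⟩).trans
      (couplingCost_le_two_rpow_mul_moments ℓ.2 hp prod_mem_couplings)
  exact h_bound.trans_lt <| ENNReal.mul_lt_top
    (ENNReal.rpow_lt_top_of_nonneg (by linarith) (by simp)) (ENNReal.add_lt_top.2 ⟨hmom₁, hmom₂⟩)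

lemma enorm_charFun_sub_le_lintegral [OpensMeasurableSpace B] [IsFiniteMeasure π]
    (hπ : π ∈ Couplings μ₁ μ₂) (ℓ : B →L[ℝ] ℝ) :
    ‖charFun μ₁ ℓ - charFun μ₂ ℓ‖ₑ ≤ ∫⁻ z, ‖ℓ z.1 - ℓ z.2‖ₑ ∂π := by
  set e : B → ℂ := fun x => Complex.exp (Complex.I * (ℓ x : ℂ))
  have he : Measurable e := by fun_prop
  have he_int {f : B × B → B} (hf : Measurable f) : Integrable (fun z => e (f z)) π :=
    .of_bound (he.comp hf).aestronglyMeasurable 1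
      (.of_forall fun z => (Complex.norm_exp_I_mul_ofReal _).le)
  have h_sub : charFun μ₁ ℓ - charFun μ₂ ℓ = ∫ z, (e z.1 - e z.2) ∂π := by
    rw [integral_sub (he_int measurable_fst) (he_int measurable_snd),
      integral_fst_of_mem_couplings hπ he.aestronglyMeasurable,
      integral_snd_of_mem_couplings hπ he.aestronglyMeasurable]
    rfl
  rw [h_sub]
  exact (enorm_integral_le_lintegral_enorm _).trans
    (lintegral_mono fun z => Complex.enorm_exp_I_mul_ofReal_sub_exp_I_mul_ofReal_le _ _)

lemma enorm_charFun_sub_le_couplingCost [OpensMeasurableSpace B] [IsProbabilityMeasure π]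
    (hπ : π ∈ Couplings μ₁ μ₂) {ℓ : B →L[ℝ] ℝ} (hℓ : ℓ ≠ 0) (hp : 1 ≤ p) :
    ‖charFun μ₁ ℓ - charFun μ₂ ℓ‖ₑ ≤ ‖ℓ‖ₑ * couplingCost p ℓ π ^ (1 / p) := by
  have hp0 : 0 < p := by linarith
  calc ‖charFun μ₁ ℓ - charFun μ₂ ℓ‖ₑ ≤ ∫⁻ z, ‖ℓ z.1 - ℓ z.2‖ₑ ∂π :=
        enorm_charFun_sub_le_lintegral hπ ℓ
    _ ≤ (∫⁻ z, ‖ℓ z.1 - ℓ z.2‖ₑ ^ p ∂π) ^ (1 / p) :=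
        lintegral_enorm_le_lintegral_enorm_rpow hp (by fun_prop)
    _ = ‖ℓ‖ₑ * couplingCost p ℓ π ^ (1 / p) := by
        rw [← enorm_rpow_mul_couplingCost hℓ hp0.le,
          ENNReal.mul_rpow_of_nonneg _ _ (by positivity), one_div, ENNReal.rpow_rpow_inv hp0.ne']

lemma enorm_charFun_sub_le_enorm_mul_weakWass [OpensMeasurableSpace B] [IsProbabilityMeasure μ₁]
    {ℓ : B →L[ℝ] ℝ} (hℓ : ℓ ≠ 0) (hp : 1 ≤ p) :
    ‖charFun μ₁ ℓ - charFun μ₂ ℓ‖ₑ ≤ ‖ℓ‖ₑ * weakWass p μ₁ μ₂ := by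
  have hp0 : 0 < 1 / p := by positivity
  have hℓ0 : ‖ℓ‖ₑ ≠ 0 := by simpa [enorm_eq_nnnorm] using hℓ
  calc ‖charFun μ₁ ℓ - charFun μ₂ ℓ‖ₑ
      ≤ ⨅ π : Couplings μ₁ μ₂, ‖ℓ‖ₑ * couplingCost p ℓ π ^ (1 / p) := le_iInf fun π =>
        have := isProbabilityMeasure_of_mem_couplings π.2
        enorm_charFun_sub_le_couplingCost π.2 hℓ hp
    _ = ‖ℓ‖ₑ * (⨅ π : Couplings μ₁ μ₂, couplingCost p ℓ π) ^ (1 / p) := by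
        have h_rpow := (ENNReal.orderIsoRpow (1 / p) hp0).map_iInf
          fun π : Couplings μ₁ μ₂ => couplingCost p ℓ π
        simp only [ENNReal.orderIsoRpow_apply] at h_rpow
        rw [h_rpow, ENNReal.mul_iInf_of_ne hℓ0 enorm_ne_top]
    _ ≤ ‖ℓ‖ₑ * weakWass p μ₁ μ₂ := by
        unfold weakWass
        gcongr
        exact iInf_couplingCost_le_weakWassPow hℓ

end WeakWasserstein

theorem charFun_dist_le_weakWass_general
    {B : Type*} [NormedAddCommGroup B] [NormedSpace ℝ B]
    [MeasurableSpace B] [BorelSpace B]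
    (p : ℝ) (hp : 1 ≤ p) (μ₁ μ₂ : Measure B)
    [IsProbabilityMeasure μ₁] [IsProbabilityMeasure μ₂]
    (hmom₁ : ∫⁻ x, ENNReal.ofReal (‖x‖ ^ p) ∂μ₁ < ∞)
    (hmom₂ : ∫⁻ x, ENNReal.ofReal (‖x‖ ^ p) ∂μ₂ < ∞)
    (ℓ : B →L[ℝ] ℝ) :
    ‖charFun μ₁ ℓ - charFun μ₂ ℓ‖ ≤ ‖ℓ‖ * (weakWass p μ₁ μ₂).toReal := by
  rcases eq_or_ne ℓ 0 with rfl | hℓ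
  · simp [_root_.charFun]
  have hW : weakWass p μ₁ μ₂ ≠ ∞ :=
    (ENNReal.rpow_lt_top_of_nonneg (by positivity) (weakWassPow_lt_top hp hmom₁ hmom₂).ne).ne
  calc ‖charFun μ₁ ℓ - charFun μ₂ ℓ‖ = ‖charFun μ₁ ℓ - charFun μ₂ ℓ‖ₑ.toReal := by
        rw [toReal_enorm]
    _ ≤ (‖ℓ‖ₑ * weakWass p μ₁ μ₂).toReal :=
        ENNReal.toReal_mono (ENNReal.mul_ne_top enorm_ne_top hW)
          (enorm_charFun_sub_le_enorm_mul_weakWass hℓ hp)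
    _ = ‖ℓ‖ * (weakWass p μ₁ μ₂).toReal := by
        rw [ENNReal.toReal_mul, toReal_enorm]

/-- for probability measures with finite `p`-moments on a separable Banach
space, the characteristic functions satisfy
`|χ_{μ₁}(ℓ) − χ_{μ₂}(ℓ)| ≤ ‖ℓ‖ ⦀μ₁ − μ₂⦀ₚ`. -/
theorem charFun_dist_le_weakWass
    {B : Type*} [NormedAddCommGroup B] [NormedSpace ℝ B] [CompleteSpace B]
    [TopologicalSpace.SeparableSpace B] [MeasurableSpace B] [BorelSpace B]
    (p : ℝ) (hp : 1 ≤ p) (μ₁ μ₂ : Measure B)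
    [IsProbabilityMeasure μ₁] [IsProbabilityMeasure μ₂]
    (hmom₁ : ∫⁻ x, ENNReal.ofReal (‖x‖ ^ p) ∂μ₁ < ∞)
    (hmom₂ : ∫⁻ x, ENNReal.ofReal (‖x‖ ^ p) ∂μ₂ < ∞)
    (ℓ : B →L[ℝ] ℝ) :
    ‖charFun μ₁ ℓ - charFun μ₂ ℓ‖ ≤ ‖ℓ‖ * (weakWass p μ₁ μ₂).toReal :=
  charFun_dist_le_weakWass_general p hp μ₁ μ₂ hmom₁ hmom₂ ℓ
end

section
/- For any two finite (signed) measures μ and ν and any measurable function f, one has |∫ f dμ − ∫ f dν| ≤ sqrt( ‖μ − ν‖_TV · ∫ f² d(μ + ν) ), where ‖·‖_TV denotes the total variation norm. -/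
open MeasureTheory

/-!
Let `P = μ - ν` and `N = ν - μ` (truncated subtraction of measures). They form the Jordan
decomposition of `μ - ν`, so `P + N` is its total variation, and `μ + N = ν + P`. Hence
`∫ f dμ - ∫ f dν = ∫ f dP - ∫ f dN`, which is at most `∫ |f| d(P + N)`; Cauchy–Schwarz bounds
this by `√((P + N)(X) · ∫ f² d(P + N))`, and `P + N ≤ μ + ν`.
-/

namespace MeasureTheory

variable {X : Type*} [MeasurableSpace X]

theorem Measure.add_sub_eq_add_sub (μ ν : Measure X) [IsFiniteMeasure μ] [IsFiniteMeasure ν] :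
    μ + (ν - μ) = ν + (μ - ν) := by
  rw [← Measure.toSignedMeasure_eq_toSignedMeasure_iff, Measure.toSignedMeasure_add,
    Measure.toSignedMeasure_add, add_comm ν.toSignedMeasure]
  exact sub_eq_sub_iff_add_eq_add.1 Measure.sub_toSignedMeasure_eq_toSignedMeasure_sub

theorem integral_sub_integral_eq_integral_measure_sub {μ ν : Measure X}
    [IsFiniteMeasure μ] [IsFiniteMeasure ν] {f : X → ℝ} (hμ : Integrable f μ)
    (hν : Integrable f ν) :
    ∫ x, f x ∂μ - ∫ x, f x ∂ν = ∫ x, f x ∂(μ - ν) - ∫ x, f x ∂(ν - μ) := by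
  have h := congrArg (∫ x, f x ∂·) (Measure.add_sub_eq_add_sub μ ν)
  rw [integral_add_measure hμ (hν.mono_measure Measure.sub_le),
    integral_add_measure hν (hμ.mono_measure Measure.sub_le)] at h
  linarith

theorem SignedMeasure.totalVariation_toSignedMeasure_sub (μ ν : Measure X)
    [IsFiniteMeasure μ] [IsFiniteMeasure ν] :
    (μ.toSignedMeasure - ν.toSignedMeasure).totalVariation = (μ - ν) + (ν - μ) := by
  rw [SignedMeasure.totalVariation, Measure.toJordanDecomposition_toSignedMeasure_sub]
  rfl

theorem abs_integral_sub_le_integral_abs_add_measure {μ ν : Measure X} {f : X → ℝ}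
    (hμ : Integrable f μ) (hν : Integrable f ν) :
    |∫ x, f x ∂μ - ∫ x, f x ∂ν| ≤ ∫ x, |f x| ∂(μ + ν) := by
  rw [integral_add_measure hμ.abs hν.abs]
  exact (abs_sub _ _).trans (add_le_add abs_integral_le_integral_abs abs_integral_le_integral_abs)

theorem integral_abs_le_sqrt_measureReal_univ_mul_integral_sq {ρ : Measure X}
    [IsFiniteMeasure ρ] {f : X → ℝ} (hf : MemLp f 2 ρ) :
    ∫ x, |f x| ∂ρ ≤ √(ρ.real Set.univ * ∫ x, f x ^ 2 ∂ρ) := by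
  have holder := integral_mul_le_Lp_mul_Lq_of_nonneg (μ := ρ) Real.HolderConjugate.two_two
    (f := fun _ => (1 : ℝ)) (g := fun x => |f x|) (.of_forall fun _ => zero_le_one)
    (.of_forall fun x => abs_nonneg (f x))
    (by rw [ENNReal.ofReal_ofNat]; exact memLp_const 1)
    (by rw [ENNReal.ofReal_ofNat]; exact hf.abs)
  rw [Real.sqrt_mul measureReal_nonneg, Real.sqrt_eq_rpow, Real.sqrt_eq_rpow]
  simpa using holder

end MeasureTheory

theorem abs_integral_sub_le_sqrt_tv_general
    {X : Type*} [MeasurableSpace X] (μ ν : Measure X)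
    [IsFiniteMeasure μ] [IsFiniteMeasure ν]
    (f : X → ℝ)
    (hμ : Integrable f μ) (hν : Integrable f ν)
    (h2 : Integrable (fun x => f x ^ 2) (μ + ν)) :
    |∫ x, f x ∂μ - ∫ x, f x ∂ν| ≤
      Real.sqrt (((μ.toSignedMeasure - ν.toSignedMeasure).totalVariation Set.univ).toReal
        * ∫ x, f x ^ 2 ∂(μ + ν)) := by
  have hle : μ - ν + (ν - μ) ≤ μ + ν := add_le_add Measure.sub_le Measure.sub_le
  have hf : MemLp f 2 (μ - ν + (ν - μ)) :=
    (memLp_two_iff_integrable_sq (hμ.add_measure hν).aestronglyMeasurable).2 h2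
      |>.mono_measure hle
  rw [integral_sub_integral_eq_integral_measure_sub hμ hν,
    SignedMeasure.totalVariation_toSignedMeasure_sub]
  calc _ ≤ ∫ x, |f x| ∂(μ - ν + (ν - μ)) :=
        abs_integral_sub_le_integral_abs_add_measure (hμ.mono_measure Measure.sub_le)
          (hν.mono_measure Measure.sub_le)
    _ ≤ √((μ - ν + (ν - μ)).real Set.univ * ∫ x, f x ^ 2 ∂(μ - ν + (ν - μ))) :=
        integral_abs_le_sqrt_measureReal_univ_mul_integral_sq hf
    _ ≤ _ := Real.sqrt_le_sqrt <| mul_le_mul_of_nonneg_left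
        (integral_mono_measure hle (.of_forall fun x => sq_nonneg _) h2) measureReal_nonneg

/-- for finite measures `μ, ν` and a measurable function `f` that is
square-integrable with respect to `μ + ν`,
`|∫ f dμ − ∫ f dν| ≤ sqrt( ‖μ − ν‖_TV · ∫ f² d(μ+ν) )`,
where `‖μ − ν‖_TV` is the total variation norm of the signed measure `μ − ν`. -/
theorem abs_integral_sub_le_sqrt_tv
    {X : Type*} [MeasurableSpace X] (μ ν : Measure X)
    [IsFiniteMeasure μ] [IsFiniteMeasure ν]
    (f : X → ℝ) (hf : Measurable f)
    (hμ : Integrable f μ) (hν : Integrable f ν)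
    (h2 : Integrable (fun x => f x ^ 2) (μ + ν)) :
    |∫ x, f x ∂μ - ∫ x, f x ∂ν| ≤
      Real.sqrt (((μ.toSignedMeasure - ν.toSignedMeasure).totalVariation Set.univ).toReal
        * ∫ x, f x ^ 2 ∂(μ + ν)) :=
  abs_integral_sub_le_sqrt_tv_general μ ν f hμ hν h2
end
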